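/- In the key-construction setup, suppose α ∈ F^{U×K} is a (T+1)-private MDS matrix. Then for every subset C ⊆ {1,…,K} with |C| ≤ T+1, the random tuple ([Q_i]_k)_{i∈{1,…,K}, k∈C} is uniformly distributed on F^{{1,…,K}×C} (i.e., the K·|C| shares are jointly uniform). -/

import Mathlib

/-! The noise and secret vectors together are uniformly distributed on a finite additive group,
and the shares indexed by `C` are their image under an additive map. That map is surjective
because, by the MDS property, the columns of `α` indexed by `C` extend to an invertible `U × U`
submatrix. A surjective homomorphism of finite groups pushes the uniform law forward to the
uniform law, since all its fibres are cosets of the kernel. -/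

open MeasureTheory Finset
open scoped ENNReal

/-- Two (discrete) random tuples `f` and `g` are statistically independent:
the joint law of `(f, g)` is the product of the marginal laws, expressed pointwise. -/
def IndepRV {Ω A B : Type*} [MeasurableSpace Ω] (P : Measure Ω)
    (f : Ω → A) (g : Ω → B) : Prop :=
  ∀ (a : A) (b : B), P (f ⁻¹' {a} ∩ g ⁻¹' {b}) = P (f ⁻¹' {a}) * P (g ⁻¹' {b})

/-- A random variable valued in a finite type is uniformly distributed. -/
def UniformRV {Ω A : Type*} [Fintype A] [MeasurableSpace Ω] (P : Measure Ω)
    (f : Ω → A) : Prop :=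
  ∀ a : A, P (f ⁻¹' {a}) = (Fintype.card A : ℝ≥0∞)⁻¹

/-- `α ∈ F^{U×K}` is an MDS matrix: every `U×U` submatrix formed by `U` distinct
columns is invertible. -/
def IsMDS {F : Type*} [Field F] {U K : ℕ} (α : Matrix (Fin U) (Fin K) F) : Prop :=
  ∀ c : Fin U → Fin K, Function.Injective c →
    (Matrix.of fun i j : Fin U => α i (c j)).det ≠ 0

/-- `α ∈ F^{U×K}` is a `(T+1)`-private MDS matrix: it is MDS, and in addition every
`(T+1)×(T+1)` submatrix formed by `T+1` distinct columns of its last `T+1` rows is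
invertible. -/
def IsPrivateMDS {F : Type*} [Field F] {U K : ℕ} (T : ℕ) (hTU : T + 1 ≤ U)
    (α : Matrix (Fin U) (Fin K) F) : Prop :=
  IsMDS α ∧
    ∀ c : Fin (T + 1) → Fin K, Function.Injective c →
      (Matrix.of fun i j : Fin (T + 1) =>
        α ⟨U - (T + 1) + i.1, by have := i.isLt; omega⟩ (c j)).det ≠ 0

/-- The scalar share `[Q_i]_k`: the inner product of the concatenated row vector
`(N_i, S_i) ∈ F^U` with the `k`-th column of `α`. -/
def share {F : Type*} [Field F] {U K T : ℕ} (h : U - T - 1 + (T + 1) = U)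
    (α : Matrix (Fin U) (Fin K) F)
    (n : Fin (U - T - 1) → F) (s : Fin (T + 1) → F) (k : Fin K) : F :=
  ∑ j : Fin U, Fin.append n s (Fin.cast h.symm j) * α j k

namespace UniformRV

variable {Ω X : Type*} [MeasurableSpace Ω] {P : Measure Ω} [Fintype X] {g : Ω → X}

/-- The fibres of `g` need not be measurable, so additivity is unavailable: instead the fibres
inside and outside `s` are bounded above by subadditivity, and the two bounds add up to `1`. -/
theorem measure_preimage_finset [IsProbabilityMeasure P] (hg : UniformRV P g) (s : Finset X) :
    P (g ⁻¹' s) = s.card * (Fintype.card X : ℝ≥0∞)⁻¹ := by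
  classical
  have : Nonempty X := (nonempty_of_isProbabilityMeasure P).map g
  have bound (t : Finset X) : P (g ⁻¹' t) ≤ t.card * (Fintype.card X : ℝ≥0∞)⁻¹ :=
    calc P (g ⁻¹' t) = P (⋃ x ∈ t, g ⁻¹' {x}) := by rw [Finset.set_biUnion_preimage_singleton]
      _ ≤ ∑ x ∈ t, P (g ⁻¹' {x}) := measure_biUnion_finset_le t _
      _ = t.card * (Fintype.card X : ℝ≥0∞)⁻¹ := by simp [hg _]
  have total :
      s.card * (Fintype.card X : ℝ≥0∞)⁻¹ + sᶜ.card * (Fintype.card X : ℝ≥0∞)⁻¹ = 1 := by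
    rw [← add_mul, ← Nat.cast_add, Finset.card_add_card_compl]
    exact ENNReal.mul_inv_cancel (by simp) (ENNReal.natCast_ne_top _)
  refine le_antisymm (bound s) (ENNReal.le_of_add_le_add_right
    (ne_top_of_le_ne_top ENNReal.one_ne_top (le_add_self.trans total.le)) ?_)
  calc _ = P (g ⁻¹' s ∪ g ⁻¹' ↑sᶜ) := by
          rw [total, ← Set.preimage_union, Finset.coe_compl, Set.union_compl_self,
            Set.preimage_univ, measure_univ]
    _ ≤ P (g ⁻¹' s) + P (g ⁻¹' ↑sᶜ) := measure_union_le _ _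
    _ ≤ _ := add_le_add le_rfl (bound sᶜ)

theorem comp_addMonoidHom [IsProbabilityMeasure P] {Y : Type*} [AddGroup X] [AddGroup Y]
    [Fintype Y] (hg : UniformRV P g) (L : X →+ Y) (hL : Function.Surjective L) :
    UniformRV P (L ∘ g) := by
  classical
  intro y
  set fiber : Finset X := {x | L x = y}
  have hfiber : fiber.card * Fintype.card Y = Fintype.card X := by
    calc fiber.card * Fintype.card Y = ∑ y' : Y, ({x | L x = y'} : Finset X).card := by
          rw [Finset.sum_const_nat fun y' _ =>
              AddMonoidHom.card_fiber_eq_of_mem_range L (hL y') (hL y),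
            Finset.card_univ, mul_comm]
      _ = Fintype.card X := (Finset.card_eq_sum_card_fiberwise fun x _ => mem_univ _).symm
  have hfiber_ne : (fiber.card : ℝ≥0∞) ≠ 0 := by
    obtain ⟨x, hx⟩ := hL y
    exact Nat.cast_ne_zero.2 (Finset.card_ne_zero_of_mem (by simpa [fiber] using hx))
  have hpre : L ⁻¹' {y} = fiber := by ext; simp [fiber]
  rw [Set.preimage_comp, hpre, hg.measure_preimage_finset, ← hfiber,
    Nat.cast_mul, ENNReal.mul_inv (Or.inl hfiber_ne) (Or.inl (ENNReal.natCast_ne_top _)),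
    ← mul_assoc, ENNReal.mul_inv_cancel hfiber_ne (ENNReal.natCast_ne_top _), one_mul]

end UniformRV

theorem uniformRV_prod_pi_of_indep {Ω ι A B : Type*} [MeasurableSpace Ω] {P : Measure Ω} [Fintype ι]
    [DecidableEq ι] [Fintype A] [Fintype B] (N : ι → Ω → A) (S : ι → Ω → B)
    (hindep : ∀ (a : ι → A) (b : ι → B),
      P ((⋂ i, N i ⁻¹' {a i}) ∩ ⋂ i, S i ⁻¹' {b i}) =
        (∏ i, P (N i ⁻¹' {a i})) * ∏ i, P (S i ⁻¹' {b i}))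
    (hN : ∀ i, UniformRV P (N i)) (hS : ∀ i, UniformRV P (S i)) :
    UniformRV P fun ω => ((fun i => N i ω), fun i => S i ω) := by
  rintro ⟨a, b⟩
  have hpre : (fun ω => ((fun i => N i ω), fun i => S i ω)) ⁻¹' {(a, b)} =
      (⋂ i, N i ⁻¹' {a i}) ∩ ⋂ i, S i ⁻¹' {b i} := by
    ext ω; simp [funext_iff]
  rw [hpre, hindep, Finset.prod_congr rfl fun i _ => hN i (a i),
    Finset.prod_congr rfl fun i _ => hS i (b i)]
  simp only [Finset.prod_const, Finset.card_univ, Fintype.card_prod, Fintype.card_pi,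
    Nat.cast_mul]
  rw [ENNReal.mul_inv (Or.inr (ENNReal.natCast_ne_top _)) (Or.inl (ENNReal.natCast_ne_top _)),
    Nat.cast_pow, Nat.cast_pow, ENNReal.inv_pow, ENNReal.inv_pow]

section Shares

open scoped Matrix

variable {F : Type*} [Field F] {U K T : ℕ}

theorem IsMDS.surjective_vecMul_restrict {α : Matrix (Fin U) (Fin K) F} (hα : IsMDS α)
    (hUK : U ≤ K) {C : Finset (Fin K)} (hC : C.card ≤ U) :
    Function.Surjective fun v : Fin U → F => fun k : C => (v ᵥ* α) k := by
  classical
  obtain ⟨D, hCD, hD⟩ := Finset.exists_superset_card_eq hC (by simpa using hUK)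
  set e : Fin U ≃ D := (Finset.equivFinOfCardEq hD).symm
  have hunit : IsUnit (α.submatrix id fun j => (e j : Fin K)) :=
    (Matrix.isUnit_iff_isUnit_det _).2 <| isUnit_iff_ne_zero.2 <|
      hα _ fun i j hij => e.injective (Subtype.ext hij)
  intro b
  obtain ⟨v, hv⟩ := Matrix.vecMul_surjective_iff_isUnit.2 hunit
    fun j => if h : (e j : Fin K) ∈ C then b ⟨_, h⟩ else 0
  refine ⟨v, funext fun k => ?_⟩
  have hk : (v ᵥ* α) (e (e.symm ⟨k, hCD k.2⟩)) = _ := congrFun hv (e.symm ⟨k, hCD k.2⟩)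
  simpa only [Equiv.apply_symm_apply, k.2, dif_pos] using hk

theorem Fin.append_add {M : Type*} [Add M] {m n : ℕ} (a a' : Fin m → M) (b b' : Fin n → M) :
    Fin.append (a + a') (b + b') = Fin.append a b + Fin.append a' b' := by
  funext j
  refine Fin.addCases (fun i => ?_) (fun i => ?_) j <;> simp

theorem share_eq_vecMul (h : U - T - 1 + (T + 1) = U) (α : Matrix (Fin U) (Fin K) F)
    (n : Fin (U - T - 1) → F) (s : Fin (T + 1) → F) :
    share h α n s = (Fin.append n s ∘ Fin.cast h.symm) ᵥ* α :=
  rfl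

theorem share_add (h : U - T - 1 + (T + 1) = U) (α : Matrix (Fin U) (Fin K) F)
    (n n' : Fin (U - T - 1) → F) (s s' : Fin (T + 1) → F) :
    share h α (n + n') (s + s') = share h α n s + share h α n' s' := by
  simp only [share_eq_vecMul, Fin.append_add, ← Matrix.add_vecMul]
  rfl

theorem share_surjective (h : U - T - 1 + (T + 1) = U) {α : Matrix (Fin U) (Fin K) F}
    (hα : IsMDS α) (hUK : U ≤ K) {C : Finset (Fin K)} (hC : C.card ≤ U) :
    Function.Surjective fun ns : (Fin (U - T - 1) → F) × (Fin (T + 1) → F) =>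
      fun k : C => share h α ns.1 ns.2 k := by
  intro b
  obtain ⟨v, rfl⟩ := hα.surjective_vecMul_restrict hUK hC b
  refine ⟨(Fin.appendEquiv _ _).symm (v ∘ Fin.cast h), funext fun k => ?_⟩
  have happend : Fin.append ((Fin.appendEquiv _ _).symm (v ∘ Fin.cast h)).1
      ((Fin.appendEquiv _ _).symm (v ∘ Fin.cast h)).2 = v ∘ Fin.cast h :=
    (Fin.appendEquiv _ _).apply_symm_apply _
  have hcast : (v ∘ Fin.cast h) ∘ Fin.cast h.symm = v := by funext j; simp
  simp only [share_eq_vecMul, happend, hcast]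

def sharesHom (h : U - T - 1 + (T + 1) = U) (α : Matrix (Fin U) (Fin K) F)
    (C : Finset (Fin K)) :
    (Fin K → Fin (U - T - 1) → F) × (Fin K → Fin (T + 1) → F) →+ (Fin K × C → F) :=
  AddMonoidHom.mk' (fun x p => share h α (x.1 p.1) (x.2 p.1) p.2) fun x y => by
    funext p
    exact congrFun (share_add h α _ _ _ _) p.2

theorem sharesHom_surjective (h : U - T - 1 + (T + 1) = U) {α : Matrix (Fin U) (Fin K) F}
    (hα : IsMDS α) (hUK : U ≤ K) {C : Finset (Fin K)} (hC : C.card ≤ U) :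
    Function.Surjective (sharesHom h α C) := by
  intro a
  choose x hx using fun i => share_surjective h hα hUK hC fun k => a (i, k)
  exact ⟨(fun i => (x i).1, fun i => (x i).2), funext fun p => congrFun (hx p.1) p.2⟩

end Shares

/-- **Joint uniformity of the shares.**
In the key-construction setup with a `(T+1)`-private MDS matrix `α`, for every subset
`C ⊆ {1, …, K}` with `|C| ≤ T + 1`, the tuple of shares `([Q_i]_k)_{i ∈ [K], k ∈ C}` is
uniformly distributed on `F^{[K] × C}`. -/
theorem key_construction_shares_uniform
    (F : Type) [Field F] [Fintype F] (K U T : ℕ)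
    (hTU : T + 1 ≤ U) (hUK : U ≤ K)
    (Ω : Type) [MeasurableSpace Ω] (P : Measure Ω) [IsProbabilityMeasure P]
    (N : Fin K → Ω → (Fin (U - T - 1) → F))
    (S : Fin K → Ω → (Fin (T + 1) → F))
    (hindep : ∀ (a : Fin K → (Fin (U - T - 1) → F)) (b : Fin K → (Fin (T + 1) → F)),
      P ((⋂ i, N i ⁻¹' {a i}) ∩ ⋂ i, S i ⁻¹' {b i}) =
        (∏ i, P (N i ⁻¹' {a i})) * ∏ i, P (S i ⁻¹' {b i}))
    (hunifN : ∀ i, UniformRV P (N i))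
    (hunifS : ∀ i, UniformRV P (S i))
    (α : Matrix (Fin U) (Fin K) F)
    (hα : IsPrivateMDS T hTU α)
    (C : Finset (Fin K)) (hC : C.card ≤ T + 1) :
    UniformRV P
      (fun ω => fun p : Fin K × {k : Fin K // k ∈ C} =>
        share (by omega) α (N p.1 ω) (S p.1 ω) p.2.1) :=
  (uniformRV_prod_pi_of_indep N S hindep hunifN hunifS).comp_addMonoidHom (sharesHom (by omega) α C)
    (sharesHom_surjective _ hα.1 hUK (hC.trans hTU))
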